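/- arXiv:2407.13422 — 4 statements merged into one kernel-verified Lean document; each statement's English description precedes it below -/
import Mathlib

section
/- For n ≥ 3 and fixed R > 0, the function σ₀ᴰ(R, L) := (n-2)(R+L)^(n-2) R^(2-n) / ((R+L)^(n-2) R^(3-n) - R) is strictly decreasing as a function of L on (0, ∞). -/
open Real Set

theorem steklov_dirichlet_zero_strictAnti
    (n : ℕ) (hn : 3 ≤ n) (R : ℝ) (hR : 0 < R) :
    StrictAntiOn (fun L : ℝ =>
      ((n : ℝ) - 2) * (R + L) ^ ((n : ℝ) - 2) * R ^ (2 - (n : ℝ)) /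
        ((R + L) ^ ((n : ℝ) - 2) * R ^ (3 - (n : ℝ)) - R)) (Ioi 0) := by
  intro a ha b hb hab
  simp only [mem_Ioi] at ha hb
  have hn3 : (3:ℝ) ≤ (n:ℝ) := by exact_mod_cast hn
  set m : ℝ := (n : ℝ) - 2 with hm
  have hm0 : 0 < m := by rw [hm]; linarith
  have key : ∀ L : ℝ, 0 < L →
      ((n:ℝ)-2) * (R+L) ^ ((n:ℝ)-2) * R ^ (2-(n:ℝ)) /
        ((R+L) ^ ((n:ℝ)-2) * R ^ (3-(n:ℝ)) - R)
      = (m/R) * (((R+L)/R)^m / (((R+L)/R)^m - 1)) := by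
    intro L hL
    have hRL : 0 < R + L := by linarith
    have h2 : (2 - (n:ℝ)) = -m := by simp only [hm]; ring
    have h3 : (3 - (n:ℝ)) = 1 - m := by simp only [hm]; ring
    have hu : ((R+L)/R)^m = (R+L)^m * R^(-m) := by
      rw [Real.div_rpow hRL.le hR.le, Real.rpow_neg hR.le, div_eq_mul_inv]
    have hu1 : 1 < ((R+L)/R)^m := by
      rw [Real.one_lt_rpow_iff_of_pos (by positivity)]
      exact Or.inl ⟨by rw [lt_div_iff₀ hR]; linarith, hm0⟩
    have h1m : R ^ (1 - m) = R * R^(-m) := by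
      rw [sub_eq_add_neg, Real.rpow_add hR, Real.rpow_one]
    have hRm : (0:ℝ) < R ^ (-m) := Real.rpow_pos_of_pos hR _
    have hRLm : (0:ℝ) < (R+L) ^ m := Real.rpow_pos_of_pos hRL _
    rw [h2, h3, hu, h1m]
    have hden : (R+L)^m * (R * R^(-m)) - R ≠ 0 := by
      have : 0 < (R+L)^m * (R * R^(-m)) - R := by
        have : 1 < (R+L)^m * R^(-m) := hu ▸ hu1
        nlinarith
      linarith
    have hden2 : (R+L)^m * R^(-m) - 1 ≠ 0 := by
      have : 1 < (R+L)^m * R^(-m) := hu ▸ hu1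
      linarith
    field_simp
    ring
  beta_reduce
  rw [show (2 - (n:ℝ)) = 2 - (n:ℝ) from rfl]
  rw [key a ha, key b hb]
  have hua : 1 < ((R+a)/R)^m := by
    rw [Real.one_lt_rpow_iff_of_pos (by positivity)]
    exact Or.inl ⟨by rw [lt_div_iff₀ hR]; linarith, hm0⟩
  have hub : 1 < ((R+b)/R)^m := by
    rw [Real.one_lt_rpow_iff_of_pos (by positivity)]
    exact Or.inl ⟨by rw [lt_div_iff₀ hR]; linarith, hm0⟩
  have hmono : ((R+a)/R)^m < ((R+b)/R)^m := by
    exact Real.rpow_lt_rpow (by positivity)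
      ((div_lt_div_iff₀ hR hR).mpr (by nlinarith)) hm0
  set ua := ((R+a)/R)^m
  set ub := ((R+b)/R)^m
  have h : ub / (ub - 1) < ua / (ua - 1) := by
    rw [div_lt_div_iff₀ (by linarith) (by linarith)]
    nlinarith
  exact mul_lt_mul_of_pos_left h (by positivity)
end

section
/- For n ≥ 3 and fixed R > 0, the function σ₁ᴺ(R, L) := (n-1)((R+L)^n R^(-n) - 1) / (R + (1/(n-1))(R+L)^n R^(1-n)) is strictly increasing as a function of L on (0, ∞). -/
open Real Set

theorem steklov_neumann_first_strictMono
    (n : ℕ) (hn : 3 ≤ n) (R : ℝ) (hR : 0 < R) :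
    StrictMonoOn (fun L : ℝ =>
      ((n : ℝ) - 1) * ((R + L) ^ (n : ℝ) * R ^ (-(n : ℝ)) - 1) /
        (R + (1 / ((n : ℝ) - 1)) * (R + L) ^ (n : ℝ) * R ^ (1 - (n : ℝ)))) (Ioi 0) := by
  have hn3 : (3:ℝ) ≤ (n:ℝ) := by exact_mod_cast hn
  have hm0 : (0:ℝ) < (n:ℝ) - 1 := by linarith
  intro a ha b hb hab
  simp only [mem_Ioi] at ha hb
  simp only
  have hc : (0:ℝ) < R ^ (-(n:ℝ)) := rpow_pos_of_pos hR _
  have hrc : R ^ (1 - (n:ℝ)) = R * R ^ (-(n:ℝ)) := by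
    rw [show (1 - (n:ℝ)) = 1 + (-(n:ℝ)) by ring, rpow_add hR, rpow_one]
  rw [hrc]
  set c := R ^ (-(n:ℝ)) with hcdef
  set x := (R + a) ^ (n:ℝ) with hxdef
  set y := (R + b) ^ (n:ℝ) with hydef
  have hx0 : 0 < x := rpow_pos_of_pos (by linarith) _
  have hy0 : 0 < y := rpow_pos_of_pos (by linarith) _
  have hxy : x < y := by
    apply rpow_lt_rpow (by linarith) (by linarith) (by positivity)
  have hd1 : 0 < R + 1 / ((n:ℝ) - 1) * x * (R * c) := by positivity
  have hd2 : 0 < R + 1 / ((n:ℝ) - 1) * y * (R * c) := by positivity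
  rw [div_lt_div_iff₀ hd1 hd2]
  have hmt : ((n:ℝ) - 1) * (1 / ((n:ℝ) - 1)) = 1 := by
    field_simp
  nlinarith [mul_pos (mul_pos hR hc) (sub_pos.mpr hxy),
    mul_pos hm0 (mul_pos (mul_pos hR hc) (sub_pos.mpr hxy))]
end

section
/- Let n ≥ 3, R₁ ≥ R₂ > 0. Define f₁(L) = σ₀ᴰ(R₁, L₁)/(1 + (R₁/R₂)^(n-1)) + σ₀ᴰ(R₂, L - L₁)/(1 + (R₂/R₁)^(n-1)) with L₁ = (L - R₁ + R₂)/2, and f₂(L) = α(L)·σ₁ᴺ(R₁, L₁) + β(L)·σ₁ᴺ(R₂, L - L₁), where Q_i(L) = R_i^(n-1)(R_i + (R₁+R₂+L)^n R_i^(1-n)/((n-1)2^n))², α = Q₁/(Q₁+Q₂), β = Q₂/(Q₁+Q₂). Then there exists a unique L* > R₁ - R₂ with f₁(L*) = f₂(L*). -/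
open Real

noncomputable def sigmaD (n : ℕ) (R ℓ : ℝ) : ℝ :=
  ((n : ℝ) - 2) * (R + ℓ) ^ ((n : ℝ) - 2) * R ^ (2 - (n : ℝ)) /
    ((R + ℓ) ^ ((n : ℝ) - 2) * R ^ (3 - (n : ℝ)) - R)

noncomputable def sigmaN (n : ℕ) (R ℓ : ℝ) : ℝ :=
  ((n : ℝ) - 1) * ((R + ℓ) ^ (n : ℝ) * R ^ (-(n : ℝ)) - 1) /
    (R + (1 / ((n : ℝ) - 1)) * (R + ℓ) ^ (n : ℝ) * R ^ (1 - (n : ℝ)))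

noncomputable def Qcoef (n : ℕ) (R₁ R₂ L R : ℝ) : ℝ :=
  R ^ ((n : ℝ) - 1) *
    (R + (R₁ + R₂ + L) ^ (n : ℝ) * R ^ (1 - (n : ℝ)) / (((n : ℝ) - 1) * 2 ^ (n : ℝ))) ^ (2 : ℕ)

/-! ### Auxiliary definitions -/

noncomputable def Tterm (n : ℕ) (R S : ℝ) : ℝ :=
  ((n:ℝ)-2)*S^(n:ℝ)*R/(S^(n:ℝ)*R^(2:ℕ) - S^(2:ℕ)*R^(n:ℝ))

noncomputable def F1 (n : ℕ) (R₁ R₂ S : ℝ) : ℝ :=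
  Tterm n R₁ S/(1+(R₁/R₂)^((n:ℝ)-1)) + Tterm n R₂ S/(1+(R₂/R₁)^((n:ℝ)-1))

noncomputable def NNf (n : ℕ) (R₁ R₂ t : ℝ) : ℝ :=
  R₂^(n:ℝ)*((((n:ℝ)-1)*R₁^(n:ℝ)+t)*(t-R₁^(n:ℝ)))
    + R₁^(n:ℝ)*((((n:ℝ)-1)*R₂^(n:ℝ)+t)*(t-R₂^(n:ℝ)))

noncomputable def DDf (n : ℕ) (R₁ R₂ t : ℝ) : ℝ :=
  (R₁*R₂^(n:ℝ))*(((n:ℝ)-1)*R₁^(n:ℝ)+t)^(2:ℕ)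
    + (R₂*R₁^(n:ℝ))*(((n:ℝ)-1)*R₂^(n:ℝ)+t)^(2:ℕ)

noncomputable def F2 (n : ℕ) (R₁ R₂ S : ℝ) : ℝ :=
  ((n:ℝ)-1)^(2:ℕ) * NNf n R₁ R₂ (S^(n:ℝ)) / DDf n R₁ R₂ (S^(n:ℝ))

/-! ### Basic power inequalities -/

lemma pow_lt_pow_rpow' (R S : ℝ) (m : ℝ) (hR : 0 < R) (hRS : R < S) (hm : 3 ≤ m) :
    S ^ (2:ℕ) * R ^ m < S ^ m * R ^ (2:ℕ) := by
  have hS : 0 < S := hR.trans hRS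
  have h : R ^ (m - 2) < S ^ (m - 2) := Real.rpow_lt_rpow hR.le hRS (by linarith)
  rw [Real.rpow_sub hR, Real.rpow_sub hS, show (2:ℝ) = ((2:ℕ):ℝ) by norm_num,
    Real.rpow_natCast, Real.rpow_natCast] at h
  rw [div_lt_div_iff₀ (by positivity) (by positivity)] at h
  linarith [h]

/-! ### Canonical forms -/

lemma sigmaD_canon (n : ℕ) (R S : ℝ) (hR : 0 < R) (hRS : R < S) (hn : 3 ≤ (n:ℝ)) :
    sigmaD n R (S - R)
      = ((n:ℝ)-2) * S^(n:ℝ) * R / (S^(n:ℝ)*R^(2:ℕ) - S^(2:ℕ)*R^(n:ℝ)) := by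
  have hS : 0 < S := hR.trans hRS
  have hRm : (0:ℝ) < R ^ (n:ℝ) := rpow_pos_of_pos hR _
  have hSm : (0:ℝ) < S ^ (n:ℝ) := rpow_pos_of_pos hS _
  have hd : 0 < S^(n:ℝ)*R^(2:ℕ) - S^(2:ℕ)*R^(n:ℝ) := by
    have := pow_lt_pow_rpow' R S (n:ℝ) hR hRS hn; linarith
  have e2 : R ^ (2 - (n:ℝ)) = R^(2:ℕ) / R ^ (n:ℝ) := by rw [Real.rpow_sub hR]; norm_num
  have e3 : R ^ (3 - (n:ℝ)) = R^(3:ℕ) / R ^ (n:ℝ) := by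
    rw [Real.rpow_sub hR, show (3:ℝ) = ((3:ℕ):ℝ) by norm_num, Real.rpow_natCast]
  have em2 : S ^ ((n:ℝ) - 2) = S ^ (n:ℝ) / S^(2:ℕ) := by rw [Real.rpow_sub hS]; norm_num
  have hrep : S ^ (n:ℝ) / S^(2:ℕ) * (R^(3:ℕ) / R^(n:ℝ)) - R
      = R * (S^(n:ℝ)*R^(2:ℕ) - S^(2:ℕ)*R^(n:ℝ)) / (S^(2:ℕ) * R^(n:ℝ)) := by
    field_simp
  have hne : S ^ (n:ℝ) / S^(2:ℕ) * (R^(3:ℕ) / R^(n:ℝ)) - R ≠ 0 := by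
    rw [hrep]
    exact ne_of_gt (div_pos (mul_pos hR hd) (by positivity))
  unfold sigmaD
  rw [show R + (S - R) = S by ring, em2, e2, e3]
  rw [div_eq_div_iff hne hd.ne']
  field_simp

lemma sigmaN_canon (n : ℕ) (R S : ℝ) (hR : 0 < R) (hRS : R < S) (hn : 3 ≤ (n:ℝ)) :
    sigmaN n R (S - R)
      = ((n:ℝ)-1)^(2:ℕ) * (S^(n:ℝ) - R^(n:ℝ)) / (R * (((n:ℝ)-1)*R^(n:ℝ) + S^(n:ℝ))) := by
  have hS : 0 < S := hR.trans hRS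
  have hRm : (0:ℝ) < R ^ (n:ℝ) := rpow_pos_of_pos hR _
  have hSm : (0:ℝ) < S ^ (n:ℝ) := rpow_pos_of_pos hS _
  have he : (0:ℝ) < (n:ℝ) - 1 := by linarith
  have eneg : R ^ (-(n:ℝ)) = 1 / R ^ (n:ℝ) := by rw [Real.rpow_neg hR.le]; norm_num
  have e1m : R ^ (1 - (n:ℝ)) = R / R ^ (n:ℝ) := by rw [Real.rpow_sub hR]; norm_num
  have hd2 : 0 < R * (((n:ℝ)-1)*R^(n:ℝ) + S^(n:ℝ)) := by positivity
  have hrep : R + (1 / ((n:ℝ) - 1)) * S ^ (n:ℝ) * (R / R ^ (n:ℝ))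
      = R * (((n:ℝ)-1)*R^(n:ℝ) + S^(n:ℝ)) / (((n:ℝ)-1) * R^(n:ℝ)) := by
    field_simp
  have hne : R + (1 / ((n:ℝ) - 1)) * S ^ (n:ℝ) * (R / R ^ (n:ℝ)) ≠ 0 := by
    rw [hrep]; exact ne_of_gt (div_pos hd2 (by positivity))
  unfold sigmaN
  rw [show R + (S - R) = S by ring, eneg, e1m]
  rw [div_eq_div_iff hne hd2.ne']
  field_simp

lemma Qcoef_canon (n : ℕ) (R₁ R₂ L R S : ℝ) (hR : 0 < R) (hS : 0 < S)
    (hsum : R₁ + R₂ + L = 2 * S) (hn : 3 ≤ (n:ℝ)) :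
    Qcoef n R₁ R₂ L R
      = R * (((n:ℝ)-1)*R^(n:ℝ) + S^(n:ℝ))^(2:ℕ) / (((n:ℝ)-1)^(2:ℕ) * R^(n:ℝ)) := by
  have hRm : (0:ℝ) < R ^ (n:ℝ) := rpow_pos_of_pos hR _
  have hSm : (0:ℝ) < S ^ (n:ℝ) := rpow_pos_of_pos hS _
  have h2m : (0:ℝ) < (2:ℝ) ^ (n:ℝ) := rpow_pos_of_pos (by norm_num) _
  have he : (0:ℝ) < (n:ℝ) - 1 := by linarith
  have e1m : R ^ (1 - (n:ℝ)) = R / R ^ (n:ℝ) := by rw [Real.rpow_sub hR]; norm_num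
  have em1 : R ^ ((n:ℝ) - 1) = R ^ (n:ℝ) / R := by rw [Real.rpow_sub hR]; norm_num
  have hmul : (R₁ + R₂ + L) ^ (n:ℝ) = 2 ^ (n:ℝ) * S ^ (n:ℝ) := by
    rw [hsum, Real.mul_rpow (by norm_num) hS.le]
  unfold Qcoef
  rw [hmul, e1m, em1]
  field_simp

/-! ### Core algebraic monotonicity -/

lemma cross_ineq (e a1 a2 b1 b2 t s : ℝ) (he : 2 ≤ e) (ha1 : 0 < a1) (ha2 : 0 < a2)
    (hb1 : 0 < b1) (hb2 : 0 < b2) (ht : 0 < t) (hts : t < s) :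
    (a2*((e*a1+t)*(t-a1)) + a1*((e*a2+t)*(t-a2))) * (b1*(e*a1+s)^2 + b2*(e*a2+s)^2)
      < (a2*((e*a1+s)*(s-a1)) + a1*((e*a2+s)*(s-a2))) * (b1*(e*a1+t)^2 + b2*(e*a2+t)^2) := by
  have key : (a2*((e*a1+s)*(s-a1)) + a1*((e*a2+s)*(s-a2))) * (b1*(e*a1+t)^2 + b2*(e*a2+t)^2)
      - (a2*((e*a1+t)*(t-a1)) + a1*((e*a2+t)*(t-a2))) * (b1*(e*a1+s)^2 + b2*(e*a2+s)^2)
      = (s - t) * ((2*e*(a1^2*b1+a2^2*b2) + 2*a1*a2*(b1+b2)) * (s*t)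
        + (e^2*(a1+a2)*(a1^2*b1+a2^2*b2) + e*a1*a2*(a1+a2)*(b1+b2)) * (s+t)
        + (2*(e-1)*a1*a2*e^2*(a1^2*b1+a2^2*b2) + 2*e^2*a1*a2*(a1+a2)*(a1*b1+a2*b2))) := by
    ring
  have hst : 0 < s - t := by linarith
  have hs : 0 < s := ht.trans hts
  have he0 : (0:ℝ) < e := by linarith
  have he1 : (0:ℝ) < e - 1 := by linarith
  have hA : 0 < a1^2*b1+a2^2*b2 := by positivity
  have hB : 0 < a1*b1+a2*b2 := by positivity
  have t1 : 0 < (2*e*(a1^2*b1+a2^2*b2) + 2*a1*a2*(b1+b2)) * (s*t) := by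
    apply mul_pos _ (mul_pos hs ht)
    have : 0 < 2*e*(a1^2*b1+a2^2*b2) := by positivity
    nlinarith [mul_pos (mul_pos ha1 ha2) (add_pos hb1 hb2)]
  have t2 : 0 < (e^2*(a1+a2)*(a1^2*b1+a2^2*b2) + e*a1*a2*(a1+a2)*(b1+b2)) * (s+t) := by
    apply mul_pos _ (by linarith)
    have h1 : 0 < e^2*(a1+a2)*(a1^2*b1+a2^2*b2) := by positivity
    have h2 : 0 < e*a1*a2*(a1+a2)*(b1+b2) := by positivity
    linarith
  have t3 : 0 < 2*(e-1)*a1*a2*e^2*(a1^2*b1+a2^2*b2) + 2*e^2*a1*a2*(a1+a2)*(a1*b1+a2*b2) := by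
    have h1 : 0 < 2*(e-1)*a1*a2*e^2*(a1^2*b1+a2^2*b2) := by
      have : 0 < (e-1)*(a1*a2*(e^2*(a1^2*b1+a2^2*b2))) := mul_pos he1 (by positivity)
      nlinarith [this]
    have h2 : 0 < 2*e^2*a1*a2*(a1+a2)*(a1*b1+a2*b2) := by positivity
    linarith
  nlinarith [key, mul_pos hst (by linarith : (0:ℝ) < (2*e*(a1^2*b1+a2^2*b2) + 2*a1*a2*(b1+b2)) * (s*t)
        + (e^2*(a1+a2)*(a1^2*b1+a2^2*b2) + e*a1*a2*(a1+a2)*(b1+b2)) * (s+t)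
        + (2*(e-1)*a1*a2*e^2*(a1^2*b1+a2^2*b2) + 2*e^2*a1*a2*(a1+a2)*(a1*b1+a2*b2)))]

/-! ### Monotonicity of F1 and F2 -/

lemma Tterm_pos (n : ℕ) (R S : ℝ) (hR : 0 < R) (hRS : R < S) (hn : 3 ≤ (n:ℝ)) :
    0 < Tterm n R S := by
  have hS : 0 < S := hR.trans hRS
  have hd := pow_lt_pow_rpow' R S (n:ℝ) hR hRS hn
  have hSm : (0:ℝ) < S^(n:ℝ) := rpow_pos_of_pos hS _
  apply div_pos _ (by linarith)
  have : (0:ℝ) < (n:ℝ)-2 := by linarith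
  positivity

lemma Tterm_anti (n : ℕ) (R S S' : ℝ) (hR : 0 < R) (hRS : R < S) (hSS' : S < S')
    (hn : 3 ≤ (n:ℝ)) : Tterm n R S' < Tterm n R S := by
  have hS : 0 < S := hR.trans hRS
  have hS' : 0 < S' := hS.trans hSS'
  have hd := pow_lt_pow_rpow' R S (n:ℝ) hR hRS hn
  have hd' := pow_lt_pow_rpow' R S' (n:ℝ) hR (hRS.trans hSS') hn
  have hkey := pow_lt_pow_rpow' S S' (n:ℝ) hS hSS' hn
  have hRm : (0:ℝ) < R^(n:ℝ) := rpow_pos_of_pos hR _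
  have hSm : (0:ℝ) < S^(n:ℝ) := rpow_pos_of_pos hS _
  have hS'm : (0:ℝ) < S'^(n:ℝ) := rpow_pos_of_pos hS' _
  unfold Tterm
  rw [div_lt_div_iff₀ (by nlinarith) (by nlinarith)]
  have hid : ((n:ℝ)-2)*S^(n:ℝ)*R*(S'^(n:ℝ)*R^(2:ℕ) - S'^(2:ℕ)*R^(n:ℝ))
      - ((n:ℝ)-2)*S'^(n:ℝ)*R*(S^(n:ℝ)*R^(2:ℕ) - S^(2:ℕ)*R^(n:ℝ))
      = ((n:ℝ)-2)*R*R^(n:ℝ)*(S'^(n:ℝ)*S^(2:ℕ) - S'^(2:ℕ)*S^(n:ℝ)) := by ring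
  nlinarith [mul_pos (mul_pos (mul_pos (show (0:ℝ) < (n:ℝ)-2 by linarith) hR) hRm)
    (sub_pos.mpr hkey)]

lemma F1_anti (n : ℕ) (R₁ R₂ S S' : ℝ) (hR₂ : 0 < R₂) (hR : R₂ ≤ R₁)
    (hS : R₁ < S) (hSS' : S < S') (hn : 3 ≤ (n:ℝ)) :
    F1 n R₁ R₂ S' < F1 n R₁ R₂ S := by
  have hR₁ : 0 < R₁ := lt_of_lt_of_le hR₂ hR
  have hw1 : (0:ℝ) < 1+(R₁/R₂)^((n:ℝ)-1) := by positivity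
  have hw2 : (0:ℝ) < 1+(R₂/R₁)^((n:ℝ)-1) := by positivity
  have h1 := Tterm_anti n R₁ S S' hR₁ hS hSS' hn
  have h2 := Tterm_anti n R₂ S S' hR₂ (lt_of_le_of_lt hR hS) hSS' hn
  unfold F1
  gcongr

lemma DDf_pos (n : ℕ) (R₁ R₂ t : ℝ) (hR₂ : 0 < R₂) (hR : R₂ ≤ R₁) (ht : 0 < t)
    (hn : 3 ≤ (n:ℝ)) : 0 < DDf n R₁ R₂ t := by
  have hR₁ : 0 < R₁ := lt_of_lt_of_le hR₂ hR
  have ha₁ : (0:ℝ) < R₁^(n:ℝ) := rpow_pos_of_pos hR₁ _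
  have ha₂ : (0:ℝ) < R₂^(n:ℝ) := rpow_pos_of_pos hR₂ _
  have he : (0:ℝ) < (n:ℝ)-1 := by linarith
  unfold DDf
  have e1 : (0:ℝ) < ((n:ℝ)-1)*R₁^(n:ℝ)+t := by positivity
  have e2 : (0:ℝ) < ((n:ℝ)-1)*R₂^(n:ℝ)+t := by positivity
  positivity

lemma F2_mono (n : ℕ) (R₁ R₂ S S' : ℝ) (hR₂ : 0 < R₂) (hR : R₂ ≤ R₁)
    (hS : R₁ < S) (hSS' : S < S') (hn : 3 ≤ (n:ℝ)) :
    F2 n R₁ R₂ S < F2 n R₁ R₂ S' := by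
  have hR₁ : 0 < R₁ := lt_of_lt_of_le hR₂ hR
  have hS0 : 0 < S := hR₁.trans hS
  have hS'0 : 0 < S' := hS0.trans hSS'
  have ht : (0:ℝ) < S^(n:ℝ) := rpow_pos_of_pos hS0 _
  have hts : S^(n:ℝ) < S'^(n:ℝ) := Real.rpow_lt_rpow hS0.le hSS' (by linarith)
  have ha₁ : (0:ℝ) < R₁^(n:ℝ) := rpow_pos_of_pos hR₁ _
  have ha₂ : (0:ℝ) < R₂^(n:ℝ) := rpow_pos_of_pos hR₂ _
  have he2 : (0:ℝ) < ((n:ℝ)-1)^(2:ℕ) := by nlinarith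
  have hD := DDf_pos n R₁ R₂ (S^(n:ℝ)) hR₂ hR ht hn
  have hD' := DDf_pos n R₁ R₂ (S'^(n:ℝ)) hR₂ hR (ht.trans hts) hn
  unfold F2
  rw [div_lt_div_iff₀ hD hD']
  have key := cross_ineq ((n:ℝ)-1) (R₁^(n:ℝ)) (R₂^(n:ℝ)) (R₁*R₂^(n:ℝ)) (R₂*R₁^(n:ℝ))
    (S^(n:ℝ)) (S'^(n:ℝ)) (by linarith) ha₁ ha₂ (by positivity) (by positivity) ht hts
  have key' : NNf n R₁ R₂ (S^(n:ℝ)) * DDf n R₁ R₂ (S'^(n:ℝ))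
      < NNf n R₁ R₂ (S'^(n:ℝ)) * DDf n R₁ R₂ (S^(n:ℝ)) := by
    simpa [NNf, DDf] using key
  calc ((n:ℝ)-1)^(2:ℕ) * NNf n R₁ R₂ (S^(n:ℝ)) * DDf n R₁ R₂ (S'^(n:ℝ))
      = ((n:ℝ)-1)^(2:ℕ) * (NNf n R₁ R₂ (S^(n:ℝ)) * DDf n R₁ R₂ (S'^(n:ℝ))) := by ring
    _ < ((n:ℝ)-1)^(2:ℕ) * (NNf n R₁ R₂ (S'^(n:ℝ)) * DDf n R₁ R₂ (S^(n:ℝ))) :=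
        mul_lt_mul_of_pos_left key' he2
    _ = ((n:ℝ)-1)^(2:ℕ) * NNf n R₁ R₂ (S'^(n:ℝ)) * DDf n R₁ R₂ (S^(n:ℝ)) := by ring

/-! ### Pointwise identification of f₁ and f₂ -/

lemma combine_q_phi (e R₁ R₂ a₁ a₂ t : ℝ) (he : 2 ≤ e) (h1 : 0 < R₁) (h2 : 0 < R₂)
    (ha₁ : 0 < a₁) (ha₂ : 0 < a₂) (ht : 0 < t) :
    (R₁*(e*a₁+t)^(2:ℕ)/(e^(2:ℕ)*a₁)) /
        ((R₁*(e*a₁+t)^(2:ℕ)/(e^(2:ℕ)*a₁)) + (R₂*(e*a₂+t)^(2:ℕ)/(e^(2:ℕ)*a₂)))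
        * (e^(2:ℕ)*(t-a₁)/(R₁*(e*a₁+t)))
      + (R₂*(e*a₂+t)^(2:ℕ)/(e^(2:ℕ)*a₂)) /
        ((R₁*(e*a₁+t)^(2:ℕ)/(e^(2:ℕ)*a₁)) + (R₂*(e*a₂+t)^(2:ℕ)/(e^(2:ℕ)*a₂)))
        * (e^(2:ℕ)*(t-a₂)/(R₂*(e*a₂+t)))
      = e^(2:ℕ) * (a₂*((e*a₁+t)*(t-a₁)) + a₁*((e*a₂+t)*(t-a₂)))
        / ((R₁*a₂)*(e*a₁+t)^(2:ℕ) + (R₂*a₁)*(e*a₂+t)^(2:ℕ)) := by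
  have he0 : (0:ℝ) < e := by linarith
  have hp1 : (0:ℝ) < e*a₁+t := by positivity
  have hp2 : (0:ℝ) < e*a₂+t := by positivity
  have hden : (0:ℝ) < (R₁*a₂)*(e*a₁+t)^(2:ℕ) + (R₂*a₁)*(e*a₂+t)^(2:ℕ) := by positivity
  have hsum : (0:ℝ) < (R₁*(e*a₁+t)^(2:ℕ)/(e^(2:ℕ)*a₁)) + (R₂*(e*a₂+t)^(2:ℕ)/(e^(2:ℕ)*a₂)) := by
    positivity
  field_simp

lemma f1_eq (n : ℕ) (R₁ R₂ L : ℝ) (hR₂ : 0 < R₂) (hR : R₂ ≤ R₁) (hn : 3 ≤ (n:ℝ))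
    (hL : R₁ - R₂ < L) :
    sigmaD n R₁ ((L - R₁ + R₂) / 2) / (1 + (R₁ / R₂) ^ ((n : ℝ) - 1)) +
      sigmaD n R₂ (L - (L - R₁ + R₂) / 2) / (1 + (R₂ / R₁) ^ ((n : ℝ) - 1))
      = F1 n R₁ R₂ ((L+R₁+R₂)/2) := by
  have hR₁ : 0 < R₁ := lt_of_lt_of_le hR₂ hR
  have hS1 : R₁ < (L+R₁+R₂)/2 := by linarith
  have hS2 : R₂ < (L+R₁+R₂)/2 := by linarith
  have e1 : (L - R₁ + R₂)/2 = (L+R₁+R₂)/2 - R₁ := by ring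
  have e2 : L - (L - R₁ + R₂)/2 = (L+R₁+R₂)/2 - R₂ := by ring
  rw [e2, e1, sigmaD_canon n R₁ _ hR₁ hS1 hn, sigmaD_canon n R₂ _ hR₂ hS2 hn]
  rfl

lemma f2_eq (n : ℕ) (R₁ R₂ L : ℝ) (hR₂ : 0 < R₂) (hR : R₂ ≤ R₁) (hn : 3 ≤ (n:ℝ))
    (hL : R₁ - R₂ < L) :
    (Qcoef n R₁ R₂ L R₁ / (Qcoef n R₁ R₂ L R₁ + Qcoef n R₁ R₂ L R₂)) *
          sigmaN n R₁ ((L - R₁ + R₂) / 2) +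
      (Qcoef n R₁ R₂ L R₂ / (Qcoef n R₁ R₂ L R₁ + Qcoef n R₁ R₂ L R₂)) *
          sigmaN n R₂ (L - (L - R₁ + R₂) / 2)
      = F2 n R₁ R₂ ((L+R₁+R₂)/2) := by
  have hR₁ : 0 < R₁ := lt_of_lt_of_le hR₂ hR
  have hS1 : R₁ < (L+R₁+R₂)/2 := by linarith
  have hS2 : R₂ < (L+R₁+R₂)/2 := by linarith
  have hS0 : 0 < (L+R₁+R₂)/2 := lt_trans hR₁ hS1
  have e1 : (L - R₁ + R₂)/2 = (L+R₁+R₂)/2 - R₁ := by ring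
  have e2 : L - (L - R₁ + R₂)/2 = (L+R₁+R₂)/2 - R₂ := by ring
  have hsum : R₁ + R₂ + L = 2 * ((L+R₁+R₂)/2) := by ring
  have ht : (0:ℝ) < ((L+R₁+R₂)/2)^(n:ℝ) := rpow_pos_of_pos hS0 _
  have ha₁ : (0:ℝ) < R₁^(n:ℝ) := rpow_pos_of_pos hR₁ _
  have ha₂ : (0:ℝ) < R₂^(n:ℝ) := rpow_pos_of_pos hR₂ _
  rw [e2, e1, sigmaN_canon n R₁ _ hR₁ hS1 hn, sigmaN_canon n R₂ _ hR₂ hS2 hn,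
    Qcoef_canon n R₁ R₂ L R₁ _ hR₁ hS0 hsum hn, Qcoef_canon n R₁ R₂ L R₂ _ hR₂ hS0 hsum hn,
    combine_q_phi ((n:ℝ)-1) R₁ R₂ (R₁^(n:ℝ)) (R₂^(n:ℝ)) (((L+R₁+R₂)/2)^(n:ℝ))
      (by linarith) hR₁ hR₂ ha₁ ha₂ ht]
  rfl

lemma cont_rpow (m : ℝ) (hm : 0 ≤ m) : Continuous fun S : ℝ => S ^ m := by
  rw [continuous_iff_continuousAt]
  exact fun x => Real.continuousAt_rpow_const x m (Or.inr hm)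

lemma F1_contOn (n : ℕ) (R₁ R₂ : ℝ) (hR₂ : 0 < R₂) (hR : R₂ ≤ R₁) (hn : 3 ≤ (n:ℝ)) :
    ContinuousOn (F1 n R₁ R₂) (Set.Ioi R₁) := by
  have hR₁ : 0 < R₁ := lt_of_lt_of_le hR₂ hR
  have hc : Continuous fun S : ℝ => S^(n:ℝ) := cont_rpow _ (by linarith)
  have hden : ∀ R : ℝ, 0 < R → R ≤ R₁ → ∀ S ∈ Set.Ioi R₁,
      S^(n:ℝ)*R^(2:ℕ) - S^(2:ℕ)*R^(n:ℝ) ≠ 0 := by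
    intro R hR0 hRle S hS
    have := pow_lt_pow_rpow' R S (n:ℝ) hR0 (lt_of_le_of_lt hRle hS) hn
    intro h; nlinarith [this]
  unfold F1 Tterm
  apply ContinuousOn.add
  · exact ((((continuous_const.mul hc).mul continuous_const).continuousOn).div
      (((hc.mul continuous_const).sub ((continuous_pow 2).mul continuous_const)).continuousOn)
      (hden R₁ hR₁ le_rfl)).div_const _
  · exact ((((continuous_const.mul hc).mul continuous_const).continuousOn).div
      (((hc.mul continuous_const).sub ((continuous_pow 2).mul continuous_const)).continuousOn)
      (hden R₂ hR₂ hR)).div_const _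

lemma F2_contOn (n : ℕ) (R₁ R₂ : ℝ) (hR₂ : 0 < R₂) (hR : R₂ ≤ R₁) (hn : 3 ≤ (n:ℝ)) :
    ContinuousOn (F2 n R₁ R₂) (Set.Ioi R₁) := by
  have hR₁ : 0 < R₁ := lt_of_lt_of_le hR₂ hR
  have hc : Continuous fun S : ℝ => S^(n:ℝ) := cont_rpow _ (by linarith)
  have hNN : Continuous (NNf n R₁ R₂) := by unfold NNf; continuity
  have hDD : Continuous (DDf n R₁ R₂) := by unfold DDf; continuity
  unfold F2
  apply ContinuousOn.div
  · exact (continuous_const.mul (hNN.comp hc)).continuousOn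
  · exact (hDD.comp hc).continuousOn
  · intro S hS
    have hS0 : 0 < S := hR₁.trans hS
    exact (DDf_pos n R₁ R₂ (S^(n:ℝ)) hR₂ hR (rpow_pos_of_pos hS0 _) hn).ne'

lemma Tterm_le (n : ℕ) (R S : ℝ) (hR : 0 < R) (hRS : R < S) (hn : 3 ≤ (n:ℝ))
    (hcond : 2*(S^(2:ℕ)*R^(n:ℝ)) ≤ S^(n:ℝ)*R^(2:ℕ)) :
    Tterm n R S ≤ 2*((n:ℝ)-2)/R := by
  have hS : 0 < S := hR.trans hRS
  have hSm : (0:ℝ) < S^(n:ℝ) := rpow_pos_of_pos hS _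
  have hRm : (0:ℝ) < R^(n:ℝ) := rpow_pos_of_pos hR _
  have hhalf : (0:ℝ) < S^(n:ℝ)*R^(2:ℕ)/2 := by positivity
  have hnum : (0:ℝ) ≤ ((n:ℝ)-2)*S^(n:ℝ)*R := by
    have : (0:ℝ) ≤ (n:ℝ)-2 := by linarith
    positivity
  have hle : S^(n:ℝ)*R^(2:ℕ)/2 ≤ S^(n:ℝ)*R^(2:ℕ) - S^(2:ℕ)*R^(n:ℝ) := by
    nlinarith [rpow_pos_of_pos hS (n:ℝ)]
  have step : Tterm n R S ≤ ((n:ℝ)-2)*S^(n:ℝ)*R/(S^(n:ℝ)*R^(2:ℕ)/2) := by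
    unfold Tterm
    exact div_le_div_of_nonneg_left hnum hhalf hle
  have heq : ((n:ℝ)-2)*S^(n:ℝ)*R/(S^(n:ℝ)*R^(2:ℕ)/2) = 2*((n:ℝ)-2)/R := by
    field_simp
  linarith [step, heq.le, heq.ge]

lemma weight_pos1 (n : ℕ) (R₁ R₂ : ℝ) (h1 : 0 < R₁) (h2 : 0 < R₂) :
    (0:ℝ) < 1+(R₁/R₂)^((n:ℝ)-1) := by positivity

lemma weight_id (n : ℕ) (R₁ R₂ : ℝ) (hR₂ : 0 < R₂) (hR : R₂ ≤ R₁) (hn : 3 ≤ (n:ℝ)) :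
    2*((n:ℝ)-2)/R₁/(1+(R₁/R₂)^((n:ℝ)-1)) + 2*((n:ℝ)-2)/R₂/(1+(R₂/R₁)^((n:ℝ)-1))
      = 2*((n:ℝ)-2)*(R₁^(n:ℝ)+R₂^(n:ℝ))/(R₁*R₂^(n:ℝ)+R₂*R₁^(n:ℝ)) := by
  have hR₁ : 0 < R₁ := lt_of_lt_of_le hR₂ hR
  have ha₁ : (0:ℝ) < R₁^(n:ℝ) := rpow_pos_of_pos hR₁ _
  have ha₂ : (0:ℝ) < R₂^(n:ℝ) := rpow_pos_of_pos hR₂ _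
  have h1 : (R₁/R₂)^((n:ℝ)-1) = (R₁^(n:ℝ)*R₂)/(R₂^(n:ℝ)*R₁) := by
    rw [Real.div_rpow hR₁.le hR₂.le, Real.rpow_sub hR₁, Real.rpow_sub hR₂,
      Real.rpow_one, Real.rpow_one]
    field_simp
  have h2 : (R₂/R₁)^((n:ℝ)-1) = (R₂^(n:ℝ)*R₁)/(R₁^(n:ℝ)*R₂) := by
    rw [Real.div_rpow hR₂.le hR₁.le, Real.rpow_sub hR₂, Real.rpow_sub hR₁,
      Real.rpow_one, Real.rpow_one]
    field_simp
  rw [h1, h2]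
  have d1 : (0:ℝ) < R₂^(n:ℝ)*R₁ := by positivity
  have d2 : (0:ℝ) < R₁^(n:ℝ)*R₂ := by positivity
  have hs1 : (0:ℝ) < R₂^(n:ℝ)*R₁ + R₁^(n:ℝ)*R₂ := by positivity
  field_simp
  ring

-- F1 is at most twice its limit when S is large enough
lemma F1_le (n : ℕ) (R₁ R₂ S : ℝ) (hR₂ : 0 < R₂) (hR : R₂ ≤ R₁) (hS : R₁ < S)
    (hn : 3 ≤ (n:ℝ))
    (hc1 : 2*(S^(2:ℕ)*R₁^(n:ℝ)) ≤ S^(n:ℝ)*R₁^(2:ℕ))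
    (hc2 : 2*(S^(2:ℕ)*R₂^(n:ℝ)) ≤ S^(n:ℝ)*R₂^(2:ℕ)) :
    F1 n R₁ R₂ S ≤ 2*((n:ℝ)-2)*(R₁^(n:ℝ)+R₂^(n:ℝ))/(R₁*R₂^(n:ℝ)+R₂*R₁^(n:ℝ)) := by
  have hR₁ : 0 < R₁ := lt_of_lt_of_le hR₂ hR
  have hw1 : (0:ℝ) < 1+(R₁/R₂)^((n:ℝ)-1) := by positivity
  have hw2 : (0:ℝ) < 1+(R₂/R₁)^((n:ℝ)-1) := by positivity
  have t1 := Tterm_le n R₁ S hR₁ hS hn hc1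
  have t2 := Tterm_le n R₂ S hR₂ (lt_of_le_of_lt hR hS) hn hc2
  have : F1 n R₁ R₂ S ≤ 2*((n:ℝ)-2)/R₁/(1+(R₁/R₂)^((n:ℝ)-1))
      + 2*((n:ℝ)-2)/R₂/(1+(R₂/R₁)^((n:ℝ)-1)) := by
    unfold F1
    gcongr
  rw [weight_id n R₁ R₂ hR₂ hR hn] at this
  exact this

-- upper bound for F2, valid on all of Ioi R₁
lemma F2_le_M (n : ℕ) (R₁ R₂ S : ℝ) (hR₂ : 0 < R₂) (hR : R₂ ≤ R₁) (hS : R₁ < S)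
    (hn : 3 ≤ (n:ℝ)) :
    F2 n R₁ R₂ S ≤ ((n:ℝ)-1)^(2:ℕ)*(R₁^(n:ℝ)+R₂^(n:ℝ)+2*((n:ℝ)-1)*R₁^(n:ℝ))/(R₂*R₁^(n:ℝ)) := by
  have hR₁ : 0 < R₁ := lt_of_lt_of_le hR₂ hR
  have hS0 : 0 < S := hR₁.trans hS
  unfold F2
  set e : ℝ := (n:ℝ)-1 with hedef
  set a₁ : ℝ := R₁^(n:ℝ) with ha₁def
  set a₂ : ℝ := R₂^(n:ℝ) with ha₂def
  set t : ℝ := S^(n:ℝ) with htdef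
  have he : (2:ℝ) ≤ e := by rw [hedef]; linarith
  have ha₁ : 0 < a₁ := rpow_pos_of_pos hR₁ _
  have ha₂ : 0 < a₂ := rpow_pos_of_pos hR₂ _
  have hta : a₁ < t := Real.rpow_lt_rpow hR₁.le hS (by linarith)
  have haa : a₂ ≤ a₁ := Real.rpow_le_rpow hR₂.le hR (by linarith)
  have ht : 0 < t := ha₁.trans hta
  have hNNle : NNf n R₁ R₂ t ≤ (a₁+a₂+2*e*a₁)*t^2 := by
    unfold NNf
    rw [← hedef, ← ha₁def, ← ha₂def]
    nlinarith [mul_nonneg (mul_nonneg (by linarith : (0:ℝ) ≤ e) ha₁.le)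
      (mul_nonneg (by linarith : (0:ℝ) ≤ t - a₂) ht.le),
      mul_nonneg (mul_nonneg ha₁.le ha₂.le) ht.le,
      mul_nonneg (mul_nonneg (by linarith : (0:ℝ) ≤ e) (mul_nonneg ha₁.le ha₂.le))
        (by linarith : (0:ℝ) ≤ a₁ + a₂)]
  have hDDge : (R₂*a₁)*t^2 ≤ DDf n R₁ R₂ t := by
    unfold DDf
    rw [← hedef, ← ha₁def, ← ha₂def]
    have h1 : (0:ℝ) ≤ R₁*a₂*(e*a₁+t)^(2:ℕ) := by positivity
    have h2 : (0:ℝ) ≤ e*a₂*(e*a₂+2*t) := by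
      have : (0:ℝ) ≤ e := by linarith
      positivity
    nlinarith [h1, h2, mul_nonneg (mul_nonneg hR₂.le ha₁.le) h2]
  have hDD : 0 < DDf n R₁ R₂ t := DDf_pos n R₁ R₂ t hR₂ hR ht hn
  have hnum : e^(2:ℕ) * NNf n R₁ R₂ t ≤ e^(2:ℕ)*(a₁+a₂+2*e*a₁)*t^2 := by
    have := mul_le_mul_of_nonneg_left hNNle (by positivity : (0:ℝ) ≤ e^(2:ℕ))
    linarith [this]
  have key : e^(2:ℕ) * NNf n R₁ R₂ t / DDf n R₁ R₂ t
      ≤ (e^(2:ℕ)*(a₁+a₂+2*e*a₁)*t^2)/((R₂*a₁)*t^2) :=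
    div_le_div₀ (by positivity) hnum (by positivity) hDDge
  have heq : (e^(2:ℕ)*(a₁+a₂+2*e*a₁)*t^2)/((R₂*a₁)*t^2)
      = e^(2:ℕ)*(a₁+a₂+2*e*a₁)/(R₂*a₁) := by
    rw [mul_div_mul_right _ _ (by positivity : (t:ℝ)^2 ≠ 0)]
  rw [heq] at key
  exact key

-- lower bound for F2 at large S
lemma F2_ge (n : ℕ) (R₁ R₂ S : ℝ) (hR₂ : 0 < R₂) (hR : R₂ ≤ R₁) (hS : R₁ < S)
    (hn : 3 ≤ (n:ℝ))
    (ht8 : 8*((n:ℝ)-1)*R₁^(n:ℝ) ≤ S^(n:ℝ))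
    (ht48 : 48*((n:ℝ)-1)*R₁*R₂^(n:ℝ) ≤ S^(n:ℝ)*R₂) :
    3*((n:ℝ)-2)*(R₁^(n:ℝ)+R₂^(n:ℝ))/(R₁*R₂^(n:ℝ)+R₂*R₁^(n:ℝ)) ≤ F2 n R₁ R₂ S := by
  have hR₁ : 0 < R₁ := lt_of_lt_of_le hR₂ hR
  have hS0 : 0 < S := hR₁.trans hS
  unfold F2
  set e : ℝ := (n:ℝ)-1 with hedef
  set a₁ : ℝ := R₁^(n:ℝ) with ha₁def
  set a₂ : ℝ := R₂^(n:ℝ) with ha₂def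
  set t : ℝ := S^(n:ℝ) with htdef
  have he : (2:ℝ) ≤ e := by rw [hedef]; linarith
  have ha₁ : 0 < a₁ := rpow_pos_of_pos hR₁ _
  have ha₂ : 0 < a₂ := rpow_pos_of_pos hR₂ _
  have hta : a₁ < t := Real.rpow_lt_rpow hR₁.le hS (by linarith)
  have haa : a₂ ≤ a₁ := Real.rpow_le_rpow hR₂.le hR (by linarith)
  have ht : 0 < t := ha₁.trans hta
  have hB : (0:ℝ) < R₁*a₂+R₂*a₁ := by positivity
  have hDD : 0 < DDf n R₁ R₂ t := DDf_pos n R₁ R₂ t hR₂ hR ht hn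
  have hRa : R₂*a₂ ≤ R₁*a₁ := mul_le_mul hR haa ha₂.le hR₁.le
  have h1 : 7*(a₁+a₂)*t^2 ≤ 8*NNf n R₁ R₂ t := by
    unfold NNf
    rw [← hedef, ← ha₁def, ← ha₂def]
    nlinarith [mul_nonneg (by linarith : (0:ℝ) ≤ a₁+a₂)
        (mul_nonneg (by linarith : (0:ℝ) ≤ t - 8*e*a₁) ht.le),
      mul_nonneg (mul_nonneg (mul_nonneg (by linarith : (0:ℝ) ≤ 8*e) ha₁.le)
        (by linarith : (0:ℝ) ≤ a₁+a₂)) (by linarith : (0:ℝ) ≤ t - a₂),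
      mul_nonneg (mul_nonneg (by linarith : (0:ℝ) ≤ e-1) (mul_nonneg ha₁.le ha₂.le)) ht.le]
  have h2 : 6*DDf n R₁ R₂ t ≤ 7*(R₁*a₂+R₂*a₁)*t^2 := by
    have hprod : (8*e*a₁)*(48*e*R₁*a₂) ≤ t*(t*R₂) :=
      mul_le_mul ht8 ht48 (by positivity) ht.le
    unfold DDf
    rw [← hedef, ← ha₁def, ← ha₂def]
    nlinarith [mul_nonneg (mul_nonneg ha₁.le ht.le)
        (by linarith : (0:ℝ) ≤ t*R₂ - 48*e*R₁*a₂),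
      mul_le_mul_of_nonneg_left hprod ha₁.le,
      mul_le_mul_of_nonneg_left hRa (by positivity : (0:ℝ) ≤ 6*e^2*a₁*a₂),
      mul_le_mul_of_nonneg_left hR (by positivity : (0:ℝ) ≤ 12*e*a₁*a₂*t),
      mul_nonneg (mul_nonneg hR₁.le ha₂.le) (sq_nonneg t)]
  have he4 : 4*((n:ℝ)-2) ≤ e^2 := by rw [hedef]; nlinarith [sq_nonneg ((n:ℝ)-3)]
  have hgoal : 3*((n:ℝ)-2)*(a₁+a₂)*DDf n R₁ R₂ t
      ≤ e^(2:ℕ)*NNf n R₁ R₂ t*(R₁*a₂+R₂*a₁) := by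
    have c1 : (0:ℝ) ≤ ((n:ℝ)-2)*(a₁+a₂) := by
      have : (0:ℝ) ≤ (n:ℝ)-2 := by linarith
      positivity
    have c2 : (0:ℝ) ≤ e^2*(R₁*a₂+R₂*a₁) := by positivity
    have c3 : (0:ℝ) ≤ (a₁+a₂)*(R₁*a₂+R₂*a₁)*t^2 := by positivity
    have A := mul_le_mul_of_nonneg_left h2 c1
    have B := mul_le_mul_of_nonneg_left h1 c2
    have C := mul_le_mul_of_nonneg_right he4 c3
    have hsq : e^(2:ℕ) = e^2 := rfl
    rw [hsq]
    linarith [A, B, C]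
  rw [div_le_div_iff₀ hB hDD]
  exact hgoal

lemma rpow_cross_le (R₂ R₁ : ℝ) (m : ℝ) (h2 : 0 < R₂) (hle : R₂ ≤ R₁) (hm : 3 ≤ m) :
    R₂ ^ m * R₁ ^ (2:ℕ) ≤ R₁ ^ m * R₂ ^ (2:ℕ) := by
  have h1 : 0 < R₁ := lt_of_lt_of_le h2 hle
  have h : R₂ ^ (m - 2) ≤ R₁ ^ (m - 2) := Real.rpow_le_rpow h2.le hle (by linarith)
  rw [Real.rpow_sub h2, Real.rpow_sub h1, show (2:ℝ) = ((2:ℕ):ℝ) by norm_num,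
    Real.rpow_natCast, Real.rpow_natCast, div_le_div_iff₀ (by positivity) (by positivity)] at h
  linarith

set_option maxHeartbeats 1000000 in
lemma exists_S0 (n : ℕ) (R₁ R₂ : ℝ) (hR₂ : 0 < R₂) (hR : R₂ ≤ R₁) (hn : 3 ≤ (n:ℝ)) :
    ∃ S₀ : ℝ, 2*R₁ ≤ S₀ ∧ F1 n R₁ R₂ S₀ < F2 n R₁ R₂ S₀ := by
  have hR₁ : 0 < R₁ := lt_of_lt_of_le hR₂ hR
  have he3 : (0:ℝ) < (n:ℝ)-1 := by linarith
  obtain ⟨K, hK48, hK8, hK2⟩ :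
      ∃ K:ℝ, 48*((n:ℝ)-1)*R₁ ≤ K*R₂ ∧ 8*((n:ℝ)-1) ≤ K ∧ 2 ≤ K := by
    refine ⟨48*((n:ℝ)-1)*R₁/R₂ + 8*((n:ℝ)-1) + 2, ?_, ?_, ?_⟩
    · have h := div_mul_cancel₀ (48*((n:ℝ)-1)*R₁) hR₂.ne'
      nlinarith [mul_pos he3 hR₂]
    · have : (0:ℝ) < 48*((n:ℝ)-1)*R₁/R₂ := div_pos (by nlinarith) hR₂
      linarith
    · have : (0:ℝ) < 48*((n:ℝ)-1)*R₁/R₂ := div_pos (by nlinarith) hR₂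
      linarith
  have hK1 : (1:ℝ) ≤ K := by linarith
  have hK0 : (0:ℝ) < K := by linarith
  refine ⟨K*R₁, by nlinarith, ?_⟩
  have hS : R₁ < K*R₁ := by nlinarith
  have hS0 : (0:ℝ) < K*R₁ := by positivity
  have ha₁ : (0:ℝ) < R₁^(n:ℝ) := rpow_pos_of_pos hR₁ _
  have ha₂ : (0:ℝ) < R₂^(n:ℝ) := rpow_pos_of_pos hR₂ _
  have haa : R₂^(n:ℝ) ≤ R₁^(n:ℝ) := Real.rpow_le_rpow hR₂.le hR (by linarith)
  have hSm : (K*R₁)^(n:ℝ) = K^(n:ℝ) * R₁^(n:ℝ) := Real.mul_rpow hK0.le hR₁.le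
  have hK3 : K^(3:ℕ) ≤ K^(n:ℝ) := by
    have := Real.rpow_le_rpow_of_exponent_le hK1 (by linarith : (3:ℝ) ≤ (n:ℝ))
    rwa [show ((3:ℝ)) = ((3:ℕ):ℝ) by norm_num, Real.rpow_natCast] at this
  have hKK : K ≤ K^(n:ℝ) := by
    nlinarith [hK3, mul_nonneg (mul_nonneg hK0.le (by linarith : (0:ℝ) ≤ K-1))
      (by linarith : (0:ℝ) ≤ K+1)]
  have hK2sq : 2*K^(2:ℕ) ≤ K^(n:ℝ) := by nlinarith [hK3, sq_nonneg K]
  have hcross := rpow_cross_le R₂ R₁ (n:ℝ) hR₂ hR hn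
  have hc1 : 2*((K*R₁)^(2:ℕ)*R₁^(n:ℝ)) ≤ (K*R₁)^(n:ℝ)*R₁^(2:ℕ) := by
    rw [hSm]
    nlinarith [mul_le_mul_of_nonneg_right hK2sq (mul_pos ha₁ (mul_pos hR₁ hR₁)).le]
  have hc2 : 2*((K*R₁)^(2:ℕ)*R₂^(n:ℝ)) ≤ (K*R₁)^(n:ℝ)*R₂^(2:ℕ) := by
    rw [hSm]
    nlinarith [mul_le_mul_of_nonneg_left hcross (by positivity : (0:ℝ) ≤ 2*K^(2:ℕ)),
      mul_le_mul_of_nonneg_right hK2sq (by positivity : (0:ℝ) ≤ R₁^(n:ℝ)*R₂^(2:ℕ))]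
  have ht8 : 8*((n:ℝ)-1)*R₁^(n:ℝ) ≤ (K*R₁)^(n:ℝ) := by
    rw [hSm]
    nlinarith [mul_le_mul_of_nonneg_right hKK ha₁.le,
      mul_le_mul_of_nonneg_right hK8 ha₁.le]
  have ht48 : 48*((n:ℝ)-1)*R₁*R₂^(n:ℝ) ≤ (K*R₁)^(n:ℝ)*R₂ := by
    rw [hSm]
    have h₁ := mul_le_mul_of_nonneg_right hK48 ha₂.le
    have h₂ := mul_le_mul_of_nonneg_left haa (mul_pos hK0 hR₂).le
    have h₃ := mul_le_mul_of_nonneg_right hKK (mul_pos ha₁ hR₂).le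
    nlinarith [h₁, h₂, h₃]
  have hB : (0:ℝ) < R₁*R₂^(n:ℝ)+R₂*R₁^(n:ℝ) := by positivity
  have hW : (0:ℝ) < ((n:ℝ)-2)*(R₁^(n:ℝ)+R₂^(n:ℝ))/(R₁*R₂^(n:ℝ)+R₂*R₁^(n:ℝ)) := by
    apply div_pos _ hB
    have h2 : (0:ℝ) < (n:ℝ)-2 := by linarith
    have h3 : (0:ℝ) < R₁^(n:ℝ)+R₂^(n:ℝ) := by positivity
    exact mul_pos h2 h3
  calc F1 n R₁ R₂ (K*R₁) ≤ 2*((n:ℝ)-2)*(R₁^(n:ℝ)+R₂^(n:ℝ))/(R₁*R₂^(n:ℝ)+R₂*R₁^(n:ℝ)) :=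
        F1_le n R₁ R₂ (K*R₁) hR₂ hR hS hn hc1 hc2
    _ < 3*((n:ℝ)-2)*(R₁^(n:ℝ)+R₂^(n:ℝ))/(R₁*R₂^(n:ℝ)+R₂*R₁^(n:ℝ)) := by
        have h2 : (0:ℝ) < (n:ℝ)-2 := by linarith
        have h3 : (0:ℝ) < (R₁^(n:ℝ)+R₂^(n:ℝ))/(R₁*R₂^(n:ℝ)+R₂*R₁^(n:ℝ)) :=
          div_pos (by positivity) hB
        rw [mul_div_assoc, mul_div_assoc]
        nlinarith [mul_pos h2 h3]
    _ ≤ F2 n R₁ R₂ (K*R₁) := F2_ge n R₁ R₂ (K*R₁) hR₂ hR hS hn ht8 ht48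

lemma F1_big (n : ℕ) (R₁ R₂ : ℝ) (hR₂ : 0 < R₂) (hR : R₂ ≤ R₁) (hn : 3 ≤ (n:ℝ))
    (M : ℝ) : ∃ S : ℝ, R₁ < S ∧ S < 2*R₁ ∧ M < F1 n R₁ R₂ S := by
  have hR₁ : 0 < R₁ := lt_of_lt_of_le hR₂ hR
  have ha₁ : (0:ℝ) < R₁^(n:ℝ) := rpow_pos_of_pos hR₁ _
  have hw1 : (0:ℝ) < 1+(R₁/R₂)^((n:ℝ)-1) := by positivity
  have hw2 : (0:ℝ) < 1+(R₂/R₁)^((n:ℝ)-1) := by positivity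
  set w : ℝ := 1+(R₁/R₂)^((n:ℝ)-1) with hwdef
  set Mp : ℝ := max M 0 + 1 with hMpdef
  have hMp : 0 < Mp := by
    have := le_max_right M 0; simp only [hMpdef]; linarith
  have hMMp : M < Mp := by
    have := le_max_left M 0; simp only [hMpdef]; linarith
  set a : ℝ := ((n:ℝ)-2)*R₁^(n:ℝ)*R₁ with hadef
  have ha : 0 < a := by
    have h2 : (0:ℝ) < (n:ℝ)-2 := by linarith
    simp only [hadef]; positivity
  set δ : ℝ := a/(Mp*w) with hδdef
  have hδ : 0 < δ := div_pos ha (mul_pos hMp hw1)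
  have hcont : ContinuousAt (fun S : ℝ => S^(n:ℝ)*R₁^(2:ℕ) - S^(2:ℕ)*R₁^(n:ℝ)) R₁ := by
    apply Continuous.continuousAt
    exact ((cont_rpow (n:ℝ) (by linarith)).mul continuous_const).sub
      ((continuous_pow 2).mul continuous_const)
  obtain ⟨η, hη, hball⟩ := Metric.continuousAt_iff.mp hcont δ hδ
  set S : ℝ := R₁ + min η R₁/2 with hSdef
  have hmin : 0 < min η R₁ := lt_min hη hR₁
  have hS1 : R₁ < S := by simp only [hSdef]; linarith
  have hS2 : S < 2*R₁ := by
    have := min_le_right η R₁; simp only [hSdef]; linarith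
  have hdist : dist S R₁ < η := by
    have h1 : dist S R₁ = min η R₁/2 := by
      simp only [hSdef, Real.dist_eq]
      rw [show R₁ + min η R₁/2 - R₁ = min η R₁/2 by ring, abs_of_pos (by linarith)]
    rw [h1]
    have := min_le_left η R₁; linarith
  have hval := hball hdist
  have hzero : R₁^(n:ℝ)*R₁^(2:ℕ) - R₁^(2:ℕ)*R₁^(n:ℝ) = 0 := by ring
  rw [Real.dist_eq, hzero, sub_zero] at hval
  have hden : 0 < S^(n:ℝ)*R₁^(2:ℕ) - S^(2:ℕ)*R₁^(n:ℝ) := by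
    have := pow_lt_pow_rpow' R₁ S (n:ℝ) hR₁ hS1 hn; linarith
  have hlt : S^(n:ℝ)*R₁^(2:ℕ) - S^(2:ℕ)*R₁^(n:ℝ) < δ := by
    have := le_abs_self (S^(n:ℝ)*R₁^(2:ℕ) - S^(2:ℕ)*R₁^(n:ℝ)); linarith
  refine ⟨S, hS1, hS2, ?_⟩
  have hstep1 : a/δ < a/(S^(n:ℝ)*R₁^(2:ℕ) - S^(2:ℕ)*R₁^(n:ℝ)) :=
    div_lt_div_of_pos_left ha hden hlt
  have hstep2 : a/δ = Mp*w := by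
    rw [hδdef, div_div_eq_mul_div, mul_comm a (Mp*w), mul_div_assoc, div_self ha.ne', mul_one]
  have hstep3 : a/(S^(n:ℝ)*R₁^(2:ℕ) - S^(2:ℕ)*R₁^(n:ℝ)) ≤ Tterm n R₁ S := by
    unfold Tterm
    have hnum : a ≤ ((n:ℝ)-2)*S^(n:ℝ)*R₁ := by
      have h := Real.rpow_le_rpow hR₁.le hS1.le (by linarith : (0:ℝ) ≤ (n:ℝ))
      have h2 : (0:ℝ) < (n:ℝ)-2 := by linarith
      simp only [hadef]
      nlinarith [h, mul_pos h2 hR₁]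
    exact (div_le_div_iff_of_pos_right hden).mpr hnum
  have hT1 : Mp*w < Tterm n R₁ S := by
    rw [← hstep2]; exact lt_of_lt_of_le hstep1 hstep3
  have hT1w : Mp < Tterm n R₁ S / w := (lt_div_iff₀ hw1).mpr (by linarith)
  have hT2 : 0 < Tterm n R₂ S / (1+(R₂/R₁)^((n:ℝ)-1)) :=
    div_pos (Tterm_pos n R₂ S hR₂ (lt_of_le_of_lt hR hS1) hn) hw2
  have : F1 n R₁ R₂ S = Tterm n R₁ S / w + Tterm n R₂ S / (1+(R₂/R₁)^((n:ℝ)-1)) := rfl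
  rw [this]
  linarith

theorem exists_unique_crossing_length
    (n : ℕ) (hn : 3 ≤ n) (R₁ R₂ : ℝ) (hR₂ : 0 < R₂) (hR : R₂ ≤ R₁)
    (f₁ f₂ : ℝ → ℝ)
    (hf₁ : f₁ = fun L : ℝ =>
      sigmaD n R₁ ((L - R₁ + R₂) / 2) / (1 + (R₁ / R₂) ^ ((n : ℝ) - 1)) +
      sigmaD n R₂ (L - (L - R₁ + R₂) / 2) / (1 + (R₂ / R₁) ^ ((n : ℝ) - 1)))
    (hf₂ : f₂ = fun L : ℝ =>
      (Qcoef n R₁ R₂ L R₁ / (Qcoef n R₁ R₂ L R₁ + Qcoef n R₁ R₂ L R₂)) *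
          sigmaN n R₁ ((L - R₁ + R₂) / 2) +
      (Qcoef n R₁ R₂ L R₂ / (Qcoef n R₁ R₂ L R₁ + Qcoef n R₁ R₂ L R₂)) *
          sigmaN n R₂ (L - (L - R₁ + R₂) / 2)) :
    ∃! Lstar : ℝ, Lstar > R₁ - R₂ ∧ f₁ Lstar = f₂ Lstar := by
  have hn' : (3:ℝ) ≤ (n:ℝ) := by exact_mod_cast hn
  have hR₁ : 0 < R₁ := lt_of_lt_of_le hR₂ hR
  set G : ℝ → ℝ := fun L => F2 n R₁ R₂ ((L+R₁+R₂)/2) - F1 n R₁ R₂ ((L+R₁+R₂)/2) with hGdef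
  have hkey : ∀ L, R₁ - R₂ < L → f₂ L - f₁ L = G L := by
    intro L hL
    rw [hf₁, hf₂]
    simp only [hGdef]
    rw [f2_eq n R₁ R₂ L hR₂ hR hn' hL, f1_eq n R₁ R₂ L hR₂ hR hn' hL]
  have hmono : ∀ L L', R₁ - R₂ < L → L < L' → G L < G L' := by
    intro L L' hL hLL'
    have hSL : R₁ < (L+R₁+R₂)/2 := by linarith
    have hSS : (L+R₁+R₂)/2 < (L'+R₁+R₂)/2 := by linarith
    have h1 := F2_mono n R₁ R₂ ((L+R₁+R₂)/2) ((L'+R₁+R₂)/2) hR₂ hR hSL hSS hn'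
    have h2 := F1_anti n R₁ R₂ ((L+R₁+R₂)/2) ((L'+R₁+R₂)/2) hR₂ hR hSL hSS hn'
    simp only [hGdef]
    linarith
  obtain ⟨S₀, hS₀ge, hS₀lt⟩ := exists_S0 n R₁ R₂ hR₂ hR hn'
  obtain ⟨S₁, hS₁gt, hS₁lt2, hS₁big⟩ := F1_big n R₁ R₂ hR₂ hR hn'
    (((n:ℝ)-1)^(2:ℕ)*(R₁^(n:ℝ)+R₂^(n:ℝ)+2*((n:ℝ)-1)*R₁^(n:ℝ))/(R₂*R₁^(n:ℝ)))
  have hS₀gt : R₁ < S₀ := by linarith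
  have hS₁S₀ : S₁ < S₀ := by linarith
  set La : ℝ := 2*S₁ - R₁ - R₂ with hLadef
  set Lb : ℝ := 2*S₀ - R₁ - R₂ with hLbdef
  have hLaS : (La+R₁+R₂)/2 = S₁ := by simp only [hLadef]; ring
  have hLbS : (Lb+R₁+R₂)/2 = S₀ := by simp only [hLbdef]; ring
  have hLa_dom : R₁ - R₂ < La := by simp only [hLadef]; linarith
  have hLaLb : La < Lb := by simp only [hLadef, hLbdef]; linarith
  have hGa : G La < 0 := by
    have h1 := F2_le_M n R₁ R₂ S₁ hR₂ hR hS₁gt hn'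
    simp only [hGdef]
    rw [hLaS]
    linarith
  have hGb : 0 < G Lb := by
    simp only [hGdef]
    rw [hLbS]
    linarith
  have hσ : Continuous fun L : ℝ => (L+R₁+R₂)/2 := by
    have : Continuous fun L : ℝ => L + R₁ + R₂ :=
      (continuous_id.add continuous_const).add continuous_const
    exact this.div_const 2
  have hmaps : Set.MapsTo (fun L : ℝ => (L+R₁+R₂)/2) (Set.Icc La Lb) (Set.Ioi R₁) := by
    intro L hL
    have := hL.1
    simp only [Set.mem_Ioi]
    simp only [hLadef] at this
    linarith
  have hGc : ContinuousOn G (Set.Icc La Lb) := by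
    simp only [hGdef]
    exact (((F2_contOn n R₁ R₂ hR₂ hR hn').comp hσ.continuousOn hmaps).sub
      (((F1_contOn n R₁ R₂ hR₂ hR hn').comp hσ.continuousOn hmaps)))
  have h0mem : (0:ℝ) ∈ Set.Icc (G La) (G Lb) := ⟨hGa.le, hGb.le⟩
  obtain ⟨Lstar, hLmem, hGL⟩ := intermediate_value_Icc hLaLb.le hGc h0mem
  have hLstar_dom : R₁ - R₂ < Lstar := lt_of_lt_of_le hLa_dom hLmem.1
  refine ⟨Lstar, ⟨hLstar_dom, ?_⟩, ?_⟩
  · have h := hkey Lstar hLstar_dom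
    rw [hGL] at h
    linarith
  · rintro y ⟨hy, heq⟩
    have hGy : G y = 0 := by
      have h := hkey y hy
      rw [heq] at h
      linarith
    rcases lt_trichotomy y Lstar with h|h|h
    · exfalso
      have := hmono y Lstar hy h
      rw [hGy, hGL] at this
      exact lt_irrefl 0 this
    · exact h
    · exfalso
      have := hmono Lstar y hLstar_dom h
      rw [hGy, hGL] at this
      exact lt_irrefl 0 this
end

section
/- For n ≥ 3, 0 < R₂ ≤ R₁, and L ≥ R₁ - R₂, with L₁ = (L-R₁+R₂)/2, one has σ₁ᴺ(R₂, L - L₁) ≥ σ₁ᴺ(R₁, L₁), where σ₁ᴺ(R, ℓ) = (n-1)((R+ℓ)^n R^(-n) - 1)/(R + (1/(n-1))(R+ℓ)^n R^(1-n)). Equality holds iff R₁ = R₂. -/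
open Real

lemma sigma_eq (n : ℕ) (hn : 3 ≤ n) {R ℓ a : ℝ} (hR : 0 < R) (ha : 0 < a)
    (h : R + ℓ = a) :
    sigmaN n R ℓ =
      ((n : ℝ) - 1) ^ 2 * (a ^ n - R ^ n) / (R * (((n : ℝ) - 1) * R ^ n + a ^ n)) := by
  have hn' : (3 : ℝ) ≤ (n : ℝ) := by exact_mod_cast hn
  have hc : (0 : ℝ) < (n : ℝ) - 1 := by linarith
  have e1 : a ^ ((n : ℝ)) = a ^ n := rpow_natCast a n
  have e2 : R ^ (-(n : ℝ)) = (R ^ n)⁻¹ := by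
    rw [rpow_neg hR.le, rpow_natCast]
  have e3 : R ^ (1 - (n : ℝ)) = R / R ^ n := by
    rw [show (1 : ℝ) - (n : ℝ) = 1 + (-(n : ℝ)) by ring, rpow_add hR, rpow_one,
      rpow_neg hR.le, rpow_natCast, div_eq_mul_inv]
  have hRn : (0 : ℝ) < R ^ n := pow_pos hR n
  have han : (0 : ℝ) < a ^ n := pow_pos ha n
  unfold sigmaN
  rw [h, e1, e2, e3]
  have hden1 : (0 : ℝ) < R + 1 / ((n : ℝ) - 1) * a ^ n * (R / R ^ n) := by positivity
  have hden2 : (0 : ℝ) < R * (((n : ℝ) - 1) * R ^ n + a ^ n) := by positivity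
  rw [div_eq_div_iff hden1.ne' hden2.ne']
  field_simp

lemma g_strict (n : ℕ) (hn : 3 ≤ n) {a x y : ℝ} (hx : 0 < x) (hxy : x < y)
    (hya : y ≤ a) :
    ((n : ℝ) - 1) ^ 2 * (a ^ n - y ^ n) / (y * (((n : ℝ) - 1) * y ^ n + a ^ n)) <
      ((n : ℝ) - 1) ^ 2 * (a ^ n - x ^ n) / (x * (((n : ℝ) - 1) * x ^ n + a ^ n)) := by
  have hn' : (3 : ℝ) ≤ (n : ℝ) := by exact_mod_cast hn
  have hc : (0 : ℝ) < (n : ℝ) - 1 := by linarith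
  have hy : 0 < y := hx.trans hxy
  have ha : 0 < a := hy.trans_le hya
  have hXY : x ^ n ≤ y ^ n := pow_le_pow_left₀ hx.le hxy.le n
  have hYA : y ^ n ≤ a ^ n := pow_le_pow_left₀ hy.le hya n
  have hXpos : 0 < x ^ n := pow_pos hx n
  have hcross : y * x ^ n ≤ x * y ^ n := by
    obtain ⟨m, rfl⟩ : ∃ m, n = m + 1 := ⟨n - 1, by omega⟩
    have hm : x ^ m ≤ y ^ m := pow_le_pow_left₀ hx.le hxy.le m
    have hxypos : 0 < y * x := by positivity
    calc y * x ^ (m + 1) = (y * x) * x ^ m := by ring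
      _ ≤ (y * x) * y ^ m := by
          exact mul_le_mul_of_nonneg_left hm hxypos.le
      _ = x * y ^ (m + 1) := by ring
  have hd1 : 0 < y * (((n : ℝ) - 1) * y ^ n + a ^ n) := by positivity
  have hd2 : 0 < x * (((n : ℝ) - 1) * x ^ n + a ^ n) := by positivity
  rw [div_lt_div_iff₀ hd1 hd2]
  have hc2 : (0 : ℝ) < ((n : ℝ) - 1) ^ 2 := by positivity
  have h1 : 0 ≤ ((n : ℝ) - 1) * a ^ n * y * (y ^ n - x ^ n) := by
    have := sub_nonneg.2 hXY
    positivity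
  have h2 : 0 ≤ ((n : ℝ) - 1) * x ^ n * (y - x) * (a ^ n - y ^ n) := by
    have h2a := sub_nonneg.2 hxy.le
    have h2b := sub_nonneg.2 hYA
    positivity
  have h3 : 0 < a ^ n * a ^ n * (y - x) := by
    have := sub_pos.2 hxy
    positivity
  have h4 : 0 ≤ a ^ n * (x * y ^ n - y * x ^ n) := by
    have := sub_nonneg.2 hcross
    positivity
  nlinarith [mul_pos hc2 h3, mul_nonneg hc2.le h1, mul_nonneg hc2.le h2,
    mul_nonneg hc2.le h4]

theorem smaller_inner_radius_larger_neumann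
    (n : ℕ) (hn : 3 ≤ n) (R₁ R₂ L : ℝ) (hR₂ : 0 < R₂) (hR : R₂ ≤ R₁)
    (hL : R₁ - R₂ ≤ L) (L₁ : ℝ) (hL₁ : L₁ = (L - R₁ + R₂) / 2) :
    sigmaN n R₁ L₁ ≤ sigmaN n R₂ (L - L₁) ∧
      (sigmaN n R₂ (L - L₁) = sigmaN n R₁ L₁ ↔ R₁ = R₂) := by
  have hR₁ : 0 < R₁ := hR₂.trans_le hR
  set a : ℝ := (R₁ + R₂ + L) / 2 with ha_def
  have ha1 : R₁ + L₁ = a := by rw [hL₁]; ring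
  have ha2 : R₂ + (L - L₁) = a := by rw [hL₁]; ring
  have hRa : R₁ ≤ a := by rw [ha_def]; linarith
  have ha : 0 < a := hR₁.trans_le hRa
  have hE1 : sigmaN n R₁ L₁ =
      ((n : ℝ) - 1) ^ 2 * (a ^ n - R₁ ^ n) / (R₁ * (((n : ℝ) - 1) * R₁ ^ n + a ^ n)) :=
    sigma_eq n hn hR₁ ha ha1
  have hE2 : sigmaN n R₂ (L - L₁) =
      ((n : ℝ) - 1) ^ 2 * (a ^ n - R₂ ^ n) / (R₂ * (((n : ℝ) - 1) * R₂ ^ n + a ^ n)) :=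
    sigma_eq n hn hR₂ ha ha2
  rcases eq_or_lt_of_le hR with heq | hlt
  · constructor
    · rw [hE1, hE2, heq]
    · constructor
      · intro _; exact heq.symm
      · intro _; rw [hE1, hE2, heq]
  · have hstrict := g_strict n hn hR₂ hlt hRa
    constructor
    · rw [hE1, hE2]; exact hstrict.le
    · constructor
      · intro hsig
        exfalso
        rw [hE1, hE2] at hsig
        exact absurd hsig (ne_of_gt hstrict)
      · intro hR12
        exact absurd hR12.symm (ne_of_lt hlt)
end
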